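/- The total energy cost along a route is monotone nondecreasing in the vehicle mass: if energy required on arc k is r_k(M) = α_k·M + β_k with α_k ≥ 0, and battery level evolves as b_k = min(max(b_{k−1} + s_k − r_k(M), 0), B) with fuel shortfall f_k(M) = max(r_k(M) − s_k − b_{k−1}, 0), then for M ≤ M′ the total fuel shortfall satisfies Σ_k f_k(M) ≤ Σ_k f_k(M′). -/

import Mathlib

/-!
A heavier vehicle demands more energy on every arc. Since the clamped update
`b ↦ min (max (b + s - r) 0) B` is monotone in `b` and antitone in `r`, induction shows the
battery is never fuller under the heavier load, and the shortfall on each arc, antitone in the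
incoming level and monotone in the demand, can only grow.
-/

lemma battery_antitone_demand {B : ℝ} {s r r' b b' : ℕ → ℝ} (hr : ∀ k, r k ≤ r' k)
    (h0 : b' 0 = b 0)
    (hb : ∀ k, b (k + 1) = min (max (b k + s (k + 1) - r (k + 1)) 0) B)
    (hb' : ∀ k, b' (k + 1) = min (max (b' k + s (k + 1) - r' (k + 1)) 0) B) (k : ℕ) :
    b' k ≤ b k := by
  induction k with
  | zero => exact h0.le
  | succ k ih =>
    rw [hb, hb']
    have := hr (k + 1)
    exact min_le_min_right B (max_le_max_right 0 (by linarith))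

lemma shortfall_le_shortfall {x x' s r r' : ℝ} (hx : x' ≤ x) (hr : r ≤ r') :
    max (-(x + s - r)) 0 ≤ max (-(x' + s - r')) 0 :=
  max_le_max_right 0 (by linarith)

theorem stmt_13_general (B : ℝ) (n : ℕ) (b0 : ℝ)
    (α β s : ℕ → ℝ) (hα : ∀ k, 0 ≤ α k)
    (b : ℝ → ℕ → ℝ) (hbinit : ∀ M, b M 0 = b0)
    (hrec : ∀ M k, b M (k + 1) =
      min (max (b M k + s (k + 1) - (α (k + 1) * M + β (k + 1))) 0) B)
    (M M' : ℝ) (hMM' : M ≤ M') :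
    ∑ k ∈ Finset.Icc 1 n, max (-(b M (k - 1) + s k - (α k * M + β k))) 0 ≤
      ∑ k ∈ Finset.Icc 1 n, max (-(b M' (k - 1) + s k - (α k * M' + β k))) 0 := by
  have hr : ∀ k, α k * M + β k ≤ α k * M' + β k := fun k =>
    add_le_add_left (mul_le_mul_of_nonneg_left hMM' (hα k)) _
  have hb : ∀ k, b M' k ≤ b M k :=
    battery_antitone_demand hr ((hbinit M').trans (hbinit M).symm) (hrec M) (hrec M')
  exact Finset.sum_le_sum fun k _ => shortfall_le_shortfall (hb (k - 1)) (hr k)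

theorem stmt_13 (B : ℝ) (hB : 0 < B) (n : ℕ) (b0 : ℝ) (hb00 : 0 ≤ b0) (hb0B : b0 ≤ B)
    (α β s : ℕ → ℝ) (hα : ∀ k, 0 ≤ α k) (hs : ∀ k, 0 ≤ s k)
    (b : ℝ → ℕ → ℝ) (hbinit : ∀ M, b M 0 = b0)
    (hrec : ∀ M k, b M (k + 1) =
      min (max (b M k + s (k + 1) - (α (k + 1) * M + β (k + 1))) 0) B)
    (M M' : ℝ) (hM : 0 ≤ M) (hMM' : M ≤ M')
    (hrM : ∀ k, 0 ≤ α k * M + β k) (hrM' : ∀ k, 0 ≤ α k * M' + β k) :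
    ∑ k ∈ Finset.Icc 1 n, max (-(b M (k - 1) + s k - (α k * M + β k))) 0 ≤
      ∑ k ∈ Finset.Icc 1 n, max (-(b M' (k - 1) + s k - (α k * M' + β k))) 0 :=
  stmt_13_general B n b0 α β s hα b hbinit hrec M M' hMM'
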